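/- Monotonicity of reachable gold brackets: for every valid configuration c and every action τ applicable at c, reach(τ(c)) ⊆ reach(c); that is, no transition can ever add new reachable gold brackets. -/

import Mathlib

/-!
Formalization of the span-based Structure/Label transition parsing system of
Cross & Huang (2016), "Span-Based Constituency Parsing with a Structure-Label
System and Provably Optimal Dynamic Oracles".

A configuration is `(z, σ, t)` where `z` is the step number, `σ` the stack of
span boundaries and `t` the set of brackets built so far.  A bracket is a
triple `(X, i, j)` with `X` a nonterminal label and `i < j ≤ n` a span.
-/

namespace SpanParser

structure Config (N : Type*) where
  z : ℕ
  σ : List ℕ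
  t : Finset (N × ℕ × ℕ)

variable {N : Type*}

/-- The span of a bracket. -/
def span (b : N × ℕ × ℕ) : ℕ × ℕ := b.2

/-- Top (rightmost) boundary of the stack. -/
def topJ (σ : List ℕ) : ℕ := σ.getLastD 0

/-- Second-to-top boundary of the stack. -/
def topI (σ : List ℕ) : ℕ := σ.dropLast.getLastD 0

/-- Parser actions: shift, combine, label-`X`, and nolabel. -/
inductive Action (N : Type*) where
  | sh : Action N
  | comb : Action N
  | label : N → Action N
  | nolabel : Action N

variable [DecidableEq N]

/-- Applicability of an action at a configuration (for sentence length `n`). -/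
def App (n : ℕ) (c : Config N) : Action N → Prop
  | .sh      => Even c.z ∧ c.σ ≠ [] ∧ topJ c.σ < n
  | .comb    => Even c.z ∧ 3 ≤ c.σ.length
  | .label _ => Odd c.z ∧ 2 ≤ c.σ.length
  | .nolabel => Odd c.z ∧ 2 ≤ c.σ.length ∧ c.z < 4 * n - 1

/-- The result `τ(c)` of applying action `τ` to configuration `c`. -/
def doAct (c : Config N) : Action N → Config N
  | .sh      => ⟨c.z + 1, c.σ ++ [topJ c.σ + 1], c.t⟩
  | .comb    => ⟨c.z + 1, c.σ.dropLast.dropLast ++ [topJ c.σ], c.t⟩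
  | .label X => ⟨c.z + 1, c.σ, insert (X, topI c.σ, topJ c.σ) c.t⟩
  | .nolabel => ⟨c.z + 1, c.σ, c.t⟩

/-- The initial configuration `(0, [0], ∅)`. -/
def initial (N : Type*) : Config N := ⟨0, [0], ∅⟩

/-- One transition step `c ⊢ c'`. -/
def Step (n : ℕ) (c c' : Config N) : Prop := ∃ a, App n c a ∧ c' = doAct c a

/-- `⊢*`: reflexive-transitive closure of the transition relation. -/
def Reaches (n : ℕ) : Config N → Config N → Prop := Relation.ReflTransGen (Step n)

/-- A configuration is valid if it is reachable from the initial configuration. -/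
def Valid (n : ℕ) (c : Config N) : Prop := Reaches n (initial N) c

/-- A final configuration: `σ = [0, n]` and `z = 4n - 2`. -/
def Final (n : ℕ) (c : Config N) : Prop := c.σ = [0, n] ∧ c.z = 4 * n - 2

/-- `D(c)`: the set of trees of final configurations reachable from `c`. -/
def Dset (n : ℕ) (c : Config N) : Set (Finset (N × ℕ × ℕ)) :=
  {t' | ∃ c', Reaches n c c' ∧ Final n c' ∧ c'.t = t'}

/-- `(i,j) ⪯ (p,q)`: span `(i,j)` is encompassed by `(p,q)`, i.e. `p ≤ i < j ≤ q`. -/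
def Enc (s₁ s₂ : ℕ × ℕ) : Prop := s₂.1 ≤ s₁.1 ∧ s₁.1 < s₁.2 ∧ s₁.2 ≤ s₂.2

/-- `(i,j) ≺ (p,q)`: strict encompassment. -/
def SEnc (s₁ s₂ : ℕ × ℕ) : Prop := Enc s₁ s₂ ∧ s₁ ≠ s₂

/-- `tG` is a gold tree for sentence length `n`: valid spans, pairwise-distinct
spans, pairwise non-crossing spans, and exactly one bracket with span `(0, n)`
(uniqueness follows from distinctness of spans). -/
structure IsGold (n : ℕ) (tG : Finset (N × ℕ × ℕ)) : Prop where
  validSpans : ∀ b ∈ tG, (span b).1 < (span b).2 ∧ (span b).2 ≤ n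
  distinctSpans : ∀ b₁ ∈ tG, ∀ b₂ ∈ tG, span b₁ = span b₂ → b₁ = b₂
  noncrossing : ∀ b₁ ∈ tG, ∀ b₂ ∈ tG,
    Enc (span b₁) (span b₂) ∨ Enc (span b₂) (span b₁) ∨
    (span b₁).2 ≤ (span b₂).1 ∨ (span b₂).2 ≤ (span b₁).1
  root : ∃ X, (X, 0, n) ∈ tG

open Classical in
/-- `left(c)`: gold brackets (strictly, at even steps) encompassing the top
span whose left boundary occurs on the stack. -/
noncomputable def leftSet (tG : Finset (N × ℕ × ℕ)) (c : Config N) :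
    Finset (N × ℕ × ℕ) :=
  tG.filter fun b =>
    (if Even c.z then SEnc (topI c.σ, topJ c.σ) (span b)
     else Enc (topI c.σ, topJ c.σ) (span b)) ∧ (span b).1 ∈ c.σ

open Classical in
/-- `right(c)`: gold brackets entirely on the queue. -/
noncomputable def rightSet (tG : Finset (N × ℕ × ℕ)) (c : Config N) :
    Finset (N × ℕ × ℕ) :=
  tG.filter fun b => topJ c.σ ≤ (span b).1

open Classical in
/-- `reach(c)`: the reachable gold brackets (all of `t_G` at the initial
configuration, whose stack has fewer than two boundaries). -/
noncomputable def reach (tG : Finset (N × ℕ × ℕ)) (c : Config N) :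
    Finset (N × ℕ × ℕ) :=
  if c.σ.length < 2 then tG else leftSet tG c ∪ rightSet tG c

/-- The optimal tree `t*(c) = t ∪ reach(c)`. -/
noncomputable def tstar (tG : Finset (N × ℕ × ℕ)) (c : Config N) :
    Finset (N × ℕ × ℕ) :=
  c.t ∪ reach tG c

/-- `b = next(c)`: the `≺`-minimal element of `left(c)`. -/
def IsNext (tG : Finset (N × ℕ × ℕ)) (c : Config N) (b : N × ℕ × ℕ) : Prop :=
  b ∈ leftSet tG c ∧ ∀ b' ∈ leftSet tG c, Enc (span b) (span b')

/-- The dynamic-oracle policy `dyna(c)` as a predicate on actions. -/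
def Dyna (tG : Finset (N × ℕ × ℕ)) (c : Config N) (a : Action N) : Prop :=
  if c.σ.length < 2 then a = Action.sh
  else if Even c.z then
    ∃ b, IsNext tG c b ∧
      (((span b).1 = topI c.σ ∧ topJ c.σ < (span b).2 ∧ a = Action.sh) ∨
       ((span b).1 < topI c.σ ∧ (span b).2 = topJ c.σ ∧ a = Action.comb) ∨
       ((span b).1 < topI c.σ ∧ topJ c.σ < (span b).2 ∧
          (a = Action.sh ∨ a = Action.comb)))
  else
    (∃ X, (X, topI c.σ, topJ c.σ) ∈ tG ∧ a = Action.label X) ∨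
    ((∀ X, (X, topI c.σ, topJ c.σ) ∉ tG) ∧ a = Action.nolabel)

/-- `F1` of a predicted bracket set `t'` against the gold tree `tG`
(`0` when `t' ∩ tG = ∅`). -/
noncomputable def f1 (tG t' : Finset (N × ℕ × ℕ)) : ℝ :=
  if t' ∩ tG = ∅ then 0
  else
    (2 * (((t' ∩ tG).card : ℝ) / (tG.card : ℝ)) * (((t' ∩ tG).card : ℝ) / (t'.card : ℝ))) /
      ((((t' ∩ tG).card : ℝ) / (tG.card : ℝ)) + (((t' ∩ tG).card : ℝ) / (t'.card : ℝ)))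

/-- `F1(c)`: the best `F1` among trees reachable from `c`. -/
noncomputable def configF1 (n : ℕ) (tG : Finset (N × ℕ × ℕ)) (c : Config N) : ℝ :=
  sSup (f1 tG '' Dset n c)

/-- A run of (applicable) actions from one configuration to another. -/
inductive Run (n : ℕ) : Config N → List (Action N) → Config N → Prop
  | refl (c : Config N) : Run n c [] c
  | step {c c' : Config N} {as : List (Action N)} (a : Action N)
      (happ : App n c a) (h : Run n (doAct c a) as c') : Run n c (a :: as) c'

/-- A run all of whose actions follow the dynamic oracle. -/
inductive DynaRun (n : ℕ) (tG : Finset (N × ℕ × ℕ)) : Config N → Config N → Prop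
  | refl (c : Config N) : DynaRun n tG c c
  | step {c c' : Config N} (a : Action N) (happ : App n c a) (hdyna : Dyna tG c a)
      (h : DynaRun n tG (doAct c a) c') : DynaRun n tG c c'

def isSh : Action N → Bool
  | .sh => true
  | _ => false

def isComb : Action N → Bool
  | .comb => true
  | _ => false

/-- Label-step actions: `label-X` or `nolabel`. -/
def isLabelStep : Action N → Bool
  | .label _ => true
  | .nolabel => true
  | _ => false

end SpanParser

/-!
The stack of a valid configuration is strictly increasing. A label step keeps the stack and
only relaxes `≺` to `⪯`. After `sh` from top span `(i, j)`, a gold bracket `⪯`-encompassing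
`(j, j + 1)` whose left end lies on the stack either starts at `j`, so it was in `right(c)`, or
starts at a boundary below `j`, hence at or below `i`, and then it strictly encompasses `(i, j)`.
After `comb` of `(i, k)` and `(k, j)`, a bracket encompassing `(i, j)` starts at or below
`i < k`, so it strictly encompasses `(k, j)`.
-/

namespace SpanParser

variable {N : Type*}

lemma topJ_append_singleton (l : List ℕ) (a : ℕ) : topJ (l ++ [a]) = a :=
  List.getLastD_concat

lemma topJ_eq_getLast {σ : List ℕ} (h : σ ≠ []) : topJ σ = σ.getLast h := by
  rw [topJ, List.getLastD_eq_getLast?, List.getLast?_eq_some_getLast h, Option.getD_some]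

lemma topJ_mem {σ : List ℕ} (h : σ ≠ []) : topJ σ ∈ σ :=
  topJ_eq_getLast h ▸ List.getLast_mem h

lemma dropLast_append_topJ {σ : List ℕ} (h : σ ≠ []) : σ.dropLast ++ [topJ σ] = σ :=
  topJ_eq_getLast h ▸ List.dropLast_append_getLast h

lemma dropLast_dropLast_append_topJ_sublist {σ : List ℕ} (h : σ ≠ []) :
    (σ.dropLast.dropLast ++ [topJ σ]).Sublist σ := by
  conv_rhs => rw [← dropLast_append_topJ h]
  exact σ.dropLast.dropLast_sublist.append_right _

section Increasing

variable {σ : List ℕ} {p : ℕ}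

lemma lt_topJ_of_mem_dropLast (hs : σ.Pairwise (· < ·)) (hp : p ∈ σ.dropLast) :
    p < topJ σ := by
  have hne : σ ≠ [] := by rintro rfl; simp at hp
  rw [← dropLast_append_topJ hne, List.pairwise_append] at hs
  exact hs.2.2 p hp _ (List.mem_singleton_self _)

lemma le_topJ_of_mem (hs : σ.Pairwise (· < ·)) (hp : p ∈ σ) : p ≤ topJ σ := by
  rw [← dropLast_append_topJ (List.ne_nil_of_mem hp), List.mem_append,
    List.mem_singleton] at hp
  rcases hp with hp | rfl
  · exact (lt_topJ_of_mem_dropLast hs hp).le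
  · exact le_rfl

lemma le_topI_of_mem_of_lt_topJ (hs : σ.Pairwise (· < ·)) (hp : p ∈ σ) (hlt : p < topJ σ) :
    p ≤ topI σ := by
  rw [← dropLast_append_topJ (List.ne_nil_of_mem hp), List.mem_append,
    List.mem_singleton] at hp
  rcases hp with hp | rfl
  · exact le_topJ_of_mem (hs.sublist σ.dropLast_sublist) hp
  · exact absurd hlt (lt_irrefl _)

lemma topI_lt_topJ (hs : σ.Pairwise (· < ·)) (h2 : 2 ≤ σ.length) : topI σ < topJ σ := by
  have hne : σ.dropLast ≠ [] := by
    rw [← List.length_pos_iff, List.length_dropLast]; omega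
  exact lt_topJ_of_mem_dropLast hs (topJ_mem hne)

end Increasing

variable {tG : Finset (N × ℕ × ℕ)} {c c' : Config N}

lemma mem_leftSet_of_even {b : N × ℕ × ℕ} (hz : Even c.z) :
    b ∈ leftSet tG c ↔ b ∈ tG ∧ SEnc (topI c.σ, topJ c.σ) (span b) ∧ (span b).1 ∈ c.σ := by
  simp only [leftSet, Finset.mem_filter, if_pos hz]

lemma mem_leftSet_of_odd {b : N × ℕ × ℕ} (hz : Odd c.z) :
    b ∈ leftSet tG c ↔ b ∈ tG ∧ Enc (topI c.σ, topJ c.σ) (span b) ∧ (span b).1 ∈ c.σ := by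
  simp only [leftSet, Finset.mem_filter, if_neg (Nat.not_even_iff_odd.2 hz)]

lemma mem_rightSet {b : N × ℕ × ℕ} : b ∈ rightSet tG c ↔ b ∈ tG ∧ topJ c.σ ≤ (span b).1 := by
  simp only [rightSet, Finset.mem_filter]

variable [DecidableEq N]

lemma pairwise_doAct {n : ℕ} {a : Action N} (hs : c.σ.Pairwise (· < ·)) (happ : App n c a) :
    (doAct c a).σ.Pairwise (· < ·) := by
  cases a with
  | sh =>
    refine List.pairwise_append.2 ⟨hs, List.pairwise_singleton _ _, fun p hp q hq => ?_⟩
    rw [List.mem_singleton.1 hq]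
    exact Nat.lt_succ_of_le (le_topJ_of_mem hs hp)
  | comb =>
    have hne : c.σ ≠ [] := by rintro h; simp [App, h] at happ
    exact hs.sublist (dropLast_dropLast_append_topJ_sublist hne)
  | label _ | nolabel => exact hs

lemma Valid.pairwise_σ {n : ℕ} (hc : Valid n c) : c.σ.Pairwise (· < ·) := by
  induction hc with
  | refl => simp [initial]
  | tail _ hstep ih =>
    obtain ⟨a, happ, rfl⟩ := hstep
    exact pairwise_doAct ih happ

lemma reach_subset_self : reach tG c ⊆ tG := by
  classical
  unfold reach
  split
  · exact subset_rfl
  · exact Finset.union_subset (fun _ hb => (Finset.mem_filter.1 hb).1)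
      (fun _ hb => (Finset.mem_filter.1 hb).1)

lemma reach_subset_reach (hlen : 2 ≤ c.σ.length → 2 ≤ c'.σ.length)
    (h : 2 ≤ c.σ.length → leftSet tG c' ∪ rightSet tG c' ⊆ leftSet tG c ∪ rightSet tG c) :
    reach tG c' ⊆ reach tG c := by
  by_cases h2 : 2 ≤ c.σ.length
  · have hc : reach tG c = leftSet tG c ∪ rightSet tG c := if_neg (not_lt.2 h2)
    have hc' : reach tG c' = leftSet tG c' ∪ rightSet tG c' := if_neg (not_lt.2 (hlen h2))
    rw [hc, hc']
    exact h h2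
  · have hc : reach tG c = tG := if_pos (not_le.1 h2)
    rw [hc]
    exact reach_subset_self

lemma reach_subset_of_odd (hz : Odd c.z) (hz' : c'.z = c.z + 1) (hσ : c'.σ = c.σ) :
    reach tG c' ⊆ reach tG c := by
  have hz'e : Even c'.z := hz' ▸ hz.add_one
  refine reach_subset_reach (fun h => hσ ▸ h) fun _ b hb => ?_
  simp only [Finset.mem_union, mem_leftSet_of_even hz'e, mem_leftSet_of_odd hz, mem_rightSet,
    hσ] at hb ⊢
  obtain ⟨hbG, ⟨henc, -⟩, hmem⟩ | hright := hb
  · exact Or.inl ⟨hbG, henc, hmem⟩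
  · exact Or.inr hright

lemma reach_doAct_sh_subset (hs : c.σ.Pairwise (· < ·)) (hz : Even c.z) :
    reach tG (doAct c .sh) ⊆ reach tG c := by
  refine reach_subset_reach (fun h => by simp [doAct]; omega) fun h2 b hb => ?_
  have hJ : topJ (doAct c .sh).σ = topJ c.σ + 1 := topJ_append_singleton _ _
  have hI : topI (doAct c .sh).σ = topJ c.σ := by
    simp only [doAct, topI, List.dropLast_concat]; rfl
  have hz' : Odd (doAct c .sh).z := hz.add_one
  have hij := topI_lt_topJ hs h2
  simp only [Finset.mem_union, mem_leftSet_of_odd hz',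
    mem_leftSet_of_even hz, mem_rightSet, hJ, hI] at hb ⊢
  obtain ⟨hbG, ⟨hp, -, hq⟩, hmem⟩ | ⟨hbG, hright⟩ := hb
  · have hpσ : (span b).1 ∈ c.σ := by
      simp only [doAct, List.mem_append, List.mem_singleton] at hmem
      exact hmem.resolve_right (by omega)
    rcases le_or_gt (topJ c.σ) (span b).1 with hright | hlt
    · exact Or.inr ⟨hbG, hright⟩
    · have hpi := le_topI_of_mem_of_lt_topJ hs hpσ hlt
      refine Or.inl ⟨hbG, ⟨⟨hpi, hij, by omega⟩, fun h => ?_⟩, hpσ⟩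
      rw [← h] at hq
      omega
  · exact Or.inr ⟨hbG, by omega⟩

lemma reach_doAct_comb_subset (hs : c.σ.Pairwise (· < ·)) (hz : Even c.z)
    (h3 : 3 ≤ c.σ.length) : reach tG (doAct c .comb) ⊆ reach tG c := by
  refine reach_subset_reach (fun _ => by simp [doAct]; omega) fun _ b hb => ?_
  have hne : c.σ ≠ [] := List.ne_nil_of_length_pos (by omega)
  have hz' : Odd (doAct c .comb).z := hz.add_one
  have hJ : topJ (doAct c .comb).σ = topJ c.σ := topJ_append_singleton _ _
  have hI : topI (doAct c .comb).σ = topI c.σ.dropLast := by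
    simp only [doAct, topI, List.dropLast_concat]
  have hik : topI c.σ.dropLast < topI c.σ :=
    topI_lt_topJ (hs.sublist c.σ.dropLast_sublist) (by rw [List.length_dropLast]; omega)
  have hkj := topI_lt_topJ hs (by omega)
  have hsub := dropLast_dropLast_append_topJ_sublist hne
  simp only [Finset.mem_union, mem_leftSet_of_odd hz', mem_leftSet_of_even hz, mem_rightSet, hJ,
    hI] at hb ⊢
  obtain ⟨hbG, ⟨hp, -, hq⟩, hmem⟩ | hright := hb
  · refine Or.inl ⟨hbG, ⟨⟨by omega, hkj, hq⟩, fun h => ?_⟩, hsub.subset hmem⟩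
    rw [← h] at hp
    omega
  · exact Or.inr hright

theorem reach_monotone_general (n : ℕ) (tG : Finset (N × ℕ × ℕ))
    (c : Config N) (hc : Valid n c)
    (a : Action N) (happ : App n c a) :
    reach tG (doAct c a) ⊆ reach tG c := by
  have hs := hc.pairwise_σ
  cases a with
  | sh => exact reach_doAct_sh_subset hs happ.1
  | comb => exact reach_doAct_comb_subset hs happ.1 happ.2
  | label _ | nolabel => exact reach_subset_of_odd happ.1 rfl rfl

/-- Monotonicity of reachable gold brackets: no transition from a valid
configuration can ever add new reachable gold brackets:
`reach(τ(c)) ⊆ reach(c)` for every action `τ` applicable at `c`. -/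
theorem reach_monotone (n : ℕ) (hn : 1 ≤ n) (tG : Finset (N × ℕ × ℕ))
    (hG : IsGold n tG) (c : Config N) (hc : Valid n c)
    (a : Action N) (happ : App n c a) :
    reach tG (doAct c a) ⊆ reach tG c :=
  reach_monotone_general n tG c hc a happ

end SpanParser
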